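/- arXiv:2605.15810 — 7 statements merged into one kernel-verified Lean document; each statement's English description precedes it below -/
import Mathlib

section
/- In the model with worlds {u} ∪ {v_i : i ≥ 2}, R u v_i for all i ≥ 2, e(v_i, x) = 1/2 + 1/i, e(v_i, y) = 1/2, the formula □(((x → y) → y) ∧ (y → x)) → ((□x → □y) → □y) evaluates at u to 1/2, hence is falsified (its value is strictly less than 1). -/
/-- Gödel implication on the real unit interval (as reals). -/
noncomputable def gimp (x y : ℝ) : ℝ := if x ≤ y then 1 else y

/-- Gödel negation. -/
noncomputable def gneg (x : ℝ) : ℝ := gimp x 0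
/-- Bi-modal formulas. -/
inductive MFm : Type where
  | var : ℕ → MFm
  | bot : MFm
  | and : MFm → MFm → MFm
  | or : MFm → MFm → MFm
  | imp : MFm → MFm → MFm
  | box : MFm → MFm
  | dia : MFm → MFm

/-- Evaluation in a crisp Gödel-Kripke model: `□` is the infimum over
successors (`1` if there are none), `◇` the supremum (`0` if none). -/
noncomputable def ceval {W : Type} (R : W → W → Prop) (v : W → ℕ → ℝ) :
    MFm → W → ℝ
  | .var n, u => v u n
  | .bot, _ => 0
  | .and φ ψ, u => min (ceval R v φ u) (ceval R v ψ u)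
  | .or φ ψ, u => max (ceval R v φ u) (ceval R v ψ u)
  | .imp φ ψ, u => gimp (ceval R v φ u) (ceval R v ψ u)
  | .box φ, u => sInf ({x | ∃ w, R u w ∧ x = ceval R v φ w} ∪ {1})
  | .dia φ, u => sSup ({x | ∃ w, R u w ∧ x = ceval R v φ w} ∪ {0})

/-- A crisp model is witnessed if every `□`-infimum and `◇`-supremum is
attained at a successor (or equals the trivial value `1`, resp. `0`,
corresponding to a witness with `R`-value `0` in the valued reading). -/
def CWitnessed {W : Type} (R : W → W → Prop) (v : W → ℕ → ℝ) : Prop :=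
  ∀ (φ : MFm) (u : W),
    (ceval R v (.box φ) u = 1 ∨
      ∃ w, R u w ∧ ceval R v φ w = ceval R v (.box φ) u) ∧
    (ceval R v (.dia φ) u = 0 ∨
      ∃ w, R u w ∧ ceval R v φ w = ceval R v (.dia φ) u)


/-! The successor values of `x` are `1/2 + 1/i` for `i ≥ 2`, so `□x` and `□y` both equal `1/2`, the
first as an infimum that is not attained. At every successor `y < x`, which makes
`((x → y) → y) ∧ (y → x)` true there, so the antecedent `□(…)` has value `1` and the formula
collapses to `(1/2 → 1/2) → 1/2 = 1/2`. -/

section GoedelImplication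

variable {x y : ℝ}

theorem gimp_of_le (h : x ≤ y) : gimp x y = 1 := if_pos h

theorem gimp_of_lt (h : y < x) : gimp x y = y := if_neg h.not_ge

theorem gimp_self (x : ℝ) : gimp x x = 1 := gimp_of_le le_rfl

theorem one_gimp_of_le (h : y ≤ 1) : gimp 1 y = y := by
  rcases h.lt_or_eq with h | rfl
  · exact gimp_of_lt h
  · exact gimp_self 1

theorem gimp_gimp_self_of_lt (h : y < x) : gimp (gimp x y) y = 1 := by
  rw [gimp_of_lt h, gimp_self]

end GoedelImplication

theorem isGLB_add_one_div_nat (a : ℝ) (k : ℕ) :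
    IsGLB {r | ∃ n : ℕ, k ≤ n ∧ r = a + 1 / n} a := by
  refine ⟨?_, fun b hb => le_of_forall_pos_lt_add fun ε hε => ?_⟩
  · rintro _ ⟨n, -, rfl⟩
    exact le_add_of_nonneg_right (by positivity)
  · obtain ⟨n, hn⟩ := exists_nat_one_div_lt hε
    have hmn : (n : ℝ) + 1 ≤ (max k (n + 1) : ℕ) := by exact_mod_cast le_max_right k (n + 1)
    calc b ≤ a + 1 / (max k (n + 1) : ℕ) := hb ⟨_, le_max_left _ _, rfl⟩
      _ ≤ a + 1 / ((n : ℝ) + 1) := by gcongr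
      _ < a + ε := by linarith

section BoxEvaluation

variable {W : Type} {R : W → W → Prop} {v : W → ℕ → ℝ} {φ : MFm} {u : W} {a : ℝ}

theorem ceval_box_eq_of_isGLB (ha : a ≤ 1)
    (h : IsGLB {r | ∃ w, R u w ∧ r = ceval R v φ w} a) : ceval R v (.box φ) u = a := by
  have hglb := h.union (isGLB_singleton (a := (1 : ℝ)))
  rw [min_eq_left ha] at hglb
  exact hglb.csInf_eq ⟨1, Or.inr rfl⟩

theorem ceval_box_eq_of_forall_eq (hu : ∃ w, R u w) (ha : a ≤ 1)
    (h : ∀ w, R u w → ceval R v φ w = a) : ceval R v (.box φ) u = a := by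
  have hvalues : {r | ∃ w, R u w ∧ r = ceval R v φ w} = {a} := by
    ext r
    constructor
    · rintro ⟨w, hw, rfl⟩
      exact h w hw
    · rintro rfl
      obtain ⟨w, hw⟩ := hu
      exact ⟨w, hw, (h w hw).symm⟩
  exact ceval_box_eq_of_isGLB ha (hvalues ▸ isGLB_singleton)

end BoxEvaluation

/-- in the same model, the formula
`□(((x→y)→y) ∧ (y→x)) → ((□x→□y)→□y)` evaluates to `1/2 < 1` at the root. -/
theorem wbox_falsified_in_unwitnessed_model :
    let R : ℕ → ℕ → Prop := fun a b => a = 0 ∧ 2 ≤ b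
    let v : ℕ → ℕ → ℝ := fun a n => if n = 0 then 1/2 + 1/(a:ℝ) else 1/2
    let x : MFm := .var 0
    let y : MFm := .var 1
    let WBox : MFm :=
      .imp (.box (.and (.imp (.imp x y) y) (.imp y x)))
           (.imp (.imp (.box x) (.box y)) (.box y))
    ceval R v WBox 0 = 1/2 ∧ ceval R v WBox 0 < 1 := by
  intro R v x y WBox
  have hsucc : ∃ w, R 0 w := ⟨2, rfl, le_rfl⟩
  have hbox_y : ceval R v (.box y) 0 = 1/2 :=
    ceval_box_eq_of_forall_eq hsucc (by norm_num) fun _ _ => rfl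
  have hbox_x : ceval R v (.box x) 0 = 1/2 := by
    refine ceval_box_eq_of_isGLB (by norm_num) ?_
    convert isGLB_add_one_div_nat (1/2) 2 using 1
    simp [R, v, x, ceval]
  have hbox_premise : ceval R v (.box (.and (.imp (.imp x y) y) (.imp y x))) 0 = 1 := by
    refine ceval_box_eq_of_forall_eq hsucc le_rfl fun w ⟨_, hw⟩ => ?_
    have hyx : ceval R v y w < ceval R v x w := by
      change (1/2 : ℝ) < 1/2 + 1/(w : ℝ)
      have : (0 : ℝ) < 1 / w := by positivity
      linarith
    simp only [ceval]
    rw [gimp_gimp_self_of_lt hyx, gimp_of_le hyx.le, min_self]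
  have hval : ceval R v WBox 0 = 1/2 := by
    change gimp _ (gimp (gimp _ _) _) = _
    have hhalf : (1/2 : ℝ) ≤ 1 := by norm_num
    rw [hbox_premise, hbox_x, hbox_y, gimp_self, one_gimp_of_le hhalf, one_gimp_of_le hhalf]
  exact ⟨hval, by norm_num [hval]⟩
end

section
/- In the model with worlds {u} ∪ {v_i : i ≥ 1}, R u v_i for all i, e(v_1,x)=e(v_1,y)=e(v_1,z)=1/3, and for i>1: e(v_i,x)=1/2, e(v_i,y)=1/2−1/(i+5), e(v_i,z)=1/3, the formula ((◇x → ◇y) ∧ ((◇y → ◇z) → ◇z)) → (◇z ∨ ◇((x → y) ∧ ((y → z) → z))) evaluates at u to 1/2, hence is falsified. -/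
def R0 : ℕ → ℕ → Prop := fun a b => a = 0 ∧ 1 ≤ b
noncomputable def v0 : ℕ → ℕ → ℝ := fun a n =>
  if a = 1 then 1/3
  else if n = 0 then 1/2
  else if n = 1 then 1/2 - 1/((a:ℝ) + 5)
  else 1/3

lemma frac_pos (w : ℕ) : (0:ℝ) < 1/((w:ℝ)+5) := by positivity

lemma frac_le (w : ℕ) (hw : 2 ≤ w) : (1:ℝ)/((w:ℝ)+5) ≤ 1/7 := by
  have : (7:ℝ) ≤ (w:ℝ)+5 := by
    have : (2:ℝ) ≤ (w:ℝ) := by exact_mod_cast hw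
    linarith
  rw [div_le_div_iff₀ (by positivity) (by norm_num)]; linarith

lemma v0x (w : ℕ) : v0 w 0 = if w = 1 then 1/3 else 1/2 := by simp [v0]
lemma v0y (w : ℕ) : v0 w 1 = if w = 1 then 1/3 else 1/2 - 1/((w:ℝ)+5) := by simp [v0]
lemma v0z (w : ℕ) : v0 w 2 = 1/3 := by simp [v0]

lemma hx (w : ℕ) : ceval R0 v0 (.var 0) w = if w = 1 then 1/3 else 1/2 := v0x w
lemma hy (w : ℕ) : ceval R0 v0 (.var 1) w = if w = 1 then 1/3 else 1/2 - 1/((w:ℝ)+5) := v0y w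
lemma hz (w : ℕ) : ceval R0 v0 (.var 2) w = 1/3 := v0z w

lemma hinner (w : ℕ) (hw : 1 ≤ w) :
    ceval R0 v0 (.and (.imp (.var 0) (.var 1)) (.imp (.imp (.var 1) (.var 2)) (.var 2))) w
      = if w = 1 then 1/3 else 1/2 - 1/((w:ℝ)+5) := by
  by_cases h1 : w = 1
  · subst h1
    simp [ceval, v0, gimp]
    norm_num
  · have hw2 : 2 ≤ w := by omega
    simp only [ceval, gimp, v0x, v0y, v0z, if_neg h1]
    have hp := frac_pos w
    have hf := frac_le w hw2
    rw [if_neg (show ¬((1:ℝ)/2 ≤ 1/2 - 1/((w:ℝ)+5)) by linarith),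
        if_neg (show ¬((1:ℝ)/2 - 1/((w:ℝ)+5) ≤ 1/3) by linarith),
        if_pos (le_refl (1/3 : ℝ)),
        min_eq_left (show (1:ℝ)/2 - 1/((w:ℝ)+5) ≤ 1 by linarith)]

lemma sup_attained (f : ℕ → ℝ) (c : ℝ) (hc : 0 ≤ c)
    (hmem : ∃ w : ℕ, 1 ≤ w ∧ c = f w)
    (hub : ∀ w : ℕ, 1 ≤ w → f w ≤ c) :
    sSup ({x | ∃ w, R0 0 w ∧ x = f w} ∪ {0}) = c := by
  apply IsGreatest.csSup_eq
  constructor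
  · obtain ⟨w, hw, hfw⟩ := hmem
    exact Or.inl ⟨w, ⟨rfl, hw⟩, hfw⟩
  · rintro t (⟨w, ⟨_, hw⟩, rfl⟩ | rfl)
    · exact hub w hw
    · exact hc

lemma sup_limit (f : ℕ → ℝ)
    (h2 : ∀ w : ℕ, 2 ≤ w → f w = 1/2 - 1/((w:ℝ)+5))
    (hub : ∀ w : ℕ, 1 ≤ w → f w ≤ 1/2) :
    sSup ({x | ∃ w, R0 0 w ∧ x = f w} ∪ {0}) = 1/2 := by
  apply IsLUB.csSup_eq
  · constructor
    · rintro t (⟨w, ⟨_, hw⟩, rfl⟩ | rfl)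
      · exact hub w hw
      · norm_num
    · intro b hb
      have hseq : Filter.Tendsto (fun w : ℕ => (1:ℝ)/2 - 1/((w:ℝ)+5))
          Filter.atTop (nhds (1/2)) := by
        have h0 : Filter.Tendsto (fun w : ℕ => ((w:ℝ)+5)) Filter.atTop Filter.atTop :=
          Filter.tendsto_atTop_add_const_right _ 5 tendsto_natCast_atTop_atTop
        have h1 := h0.inv_tendsto_atTop
        have h2' := Filter.Tendsto.const_sub (1/2 : ℝ) h1
        simpa [one_div] using h2'
      have hev : ∀ᶠ w : ℕ in Filter.atTop, (1:ℝ)/2 - 1/((w:ℝ)+5) ≤ b := by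
        filter_upwards [Filter.eventually_ge_atTop 2] with w hw
        have hm : f w ∈ ({x | ∃ w, R0 0 w ∧ x = f w} ∪ {0} : Set ℝ) :=
          Or.inl ⟨w, ⟨rfl, by omega⟩, rfl⟩
        have := hb hm
        rwa [h2 w hw] at this
      exact le_of_tendsto hseq hev
  · exact ⟨0, Or.inr rfl⟩

lemma dia_x : ceval R0 v0 (.dia (.var 0)) 0 = 1/2 := by
  show sSup _ = _
  have : {x | ∃ w, R0 0 w ∧ x = ceval R0 v0 (.var 0) w} ∪ {0}
      = {x | ∃ w, R0 0 w ∧ x = (fun w : ℕ => ceval R0 v0 (.var 0) w) w} ∪ {0} := rfl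
  rw [this, sup_attained _ (1/2) (by norm_num) ⟨2, by norm_num, by rw [hx]; norm_num⟩]
  intro w hw
  rw [hx]; split_ifs <;> norm_num

lemma dia_y : ceval R0 v0 (.dia (.var 1)) 0 = 1/2 := by
  show sSup _ = _
  rw [sup_limit (fun w : ℕ => ceval R0 v0 (.var 1) w)]
  · intro w hw; rw [hy, if_neg (by omega)]
  · intro w hw
    have := frac_pos w
    rw [hy]; split_ifs <;> [norm_num; linarith]

lemma dia_z : ceval R0 v0 (.dia (.var 2)) 0 = 1/3 := by
  show sSup _ = _
  rw [sup_attained (fun w : ℕ => ceval R0 v0 (.var 2) w) (1/3) (by norm_num)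
    ⟨1, le_refl 1, (hz 1).symm⟩]
  intro w hw; exact le_of_eq (hz w)

lemma dia_inner :
    ceval R0 v0 (.dia (.and (.imp (.var 0) (.var 1)) (.imp (.imp (.var 1) (.var 2)) (.var 2)))) 0
      = 1/2 := by
  show sSup _ = _
  rw [sup_limit (fun w : ℕ =>
      ceval R0 v0 (.and (.imp (.var 0) (.var 1)) (.imp (.imp (.var 1) (.var 2)) (.var 2))) w)]
  · intro w hw; rw [hinner w (by omega), if_neg (by omega)]
  · intro w hw
    have := frac_pos w
    rw [hinner w hw]; split_ifs <;> [norm_num; linarith]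

lemma key : ceval R0 v0
    (.imp (.and (.imp (.dia (.var 0)) (.dia (.var 1)))
               (.imp (.imp (.dia (.var 1)) (.dia (.var 2))) (.dia (.var 2))))
         (.or (.dia (.var 2))
              (.dia (.and (.imp (.var 0) (.var 1)) (.imp (.imp (.var 1) (.var 2)) (.var 2)))))) 0
    = 1/2 := by
  have e1 : ceval R0 v0
      (.imp (.and (.imp (.dia (.var 0)) (.dia (.var 1)))
                 (.imp (.imp (.dia (.var 1)) (.dia (.var 2))) (.dia (.var 2))))
           (.or (.dia (.var 2))
                (.dia (.and (.imp (.var 0) (.var 1)) (.imp (.imp (.var 1) (.var 2)) (.var 2)))))) 0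
      = gimp (min (gimp (ceval R0 v0 (.dia (.var 0)) 0) (ceval R0 v0 (.dia (.var 1)) 0))
              (gimp (gimp (ceval R0 v0 (.dia (.var 1)) 0) (ceval R0 v0 (.dia (.var 2)) 0))
                (ceval R0 v0 (.dia (.var 2)) 0)))
          (max (ceval R0 v0 (.dia (.var 2)) 0)
            (ceval R0 v0 (.dia (.and (.imp (.var 0) (.var 1))
              (.imp (.imp (.var 1) (.var 2)) (.var 2)))) 0)) := rfl
  rw [e1, dia_x, dia_y, dia_z, dia_inner]
  norm_num [gimp]


/-- in the same model, the formula
`((◇x→◇y) ∧ ((◇y→◇z)→◇z)) → (◇z ∨ ◇((x→y) ∧ ((y→z)→z)))` evaluates to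
`1/2 < 1` at the root, hence is falsified. -/
theorem wdia_falsified_in_unwitnessed_model :
    let R : ℕ → ℕ → Prop := fun a b => a = 0 ∧ 1 ≤ b
    let v : ℕ → ℕ → ℝ := fun a n =>
      if a = 1 then 1/3
      else if n = 0 then 1/2
      else if n = 1 then 1/2 - 1/((a:ℝ) + 5)
      else 1/3
    let x : MFm := .var 0
    let y : MFm := .var 1
    let z : MFm := .var 2
    let WDia : MFm :=
      .imp (.and (.imp (.dia x) (.dia y))
                 (.imp (.imp (.dia y) (.dia z)) (.dia z)))
           (.or (.dia z) (.dia (.and (.imp x y) (.imp (.imp y z) z))))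
    ceval R v WDia 0 = 1/2 ∧ ceval R v WDia 0 < 1 := by
  intro R v x y z WDia
  have h : ceval R v WDia 0 = 1/2 := key
  exact ⟨h, by rw [h]; norm_num⟩
end

section
/- In a witnessed crisp Gödel-Kripke model, for any world u and formulas φ, ψ: e(u, (◇φ → ◇ψ)) ≤ e(u, ¬◇ψ) ∨ e(u, ◇(φ → ψ)). That is, the formula UW_◇ := (◇x → ◇y) → (¬◇y ∨ ◇(x → y)) is valid in all witnessed crisp Gödel-Kripke models. -/
lemma gimp_eq_one {p q : ℝ} (h : p ≤ q) : gimp p q = 1 := if_pos h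

lemma gimp_mem {x y : ℝ} (hy : y ∈ Set.Icc (0:ℝ) 1) : gimp x y ∈ Set.Icc (0:ℝ) 1 := by
  unfold gimp; split
  · exact ⟨zero_le_one, le_refl 1⟩
  · exact hy

lemma ceval_mem {W : Type} (R : W → W → Prop) (v : W → ℕ → ℝ)
    (hv : ∀ w n, v w n ∈ Set.Icc (0:ℝ) 1) :
    ∀ (φ : MFm) (u : W), ceval R v φ u ∈ Set.Icc (0:ℝ) 1 := by
  intro φ
  induction φ with
  | var n => intro u; exact hv u n
  | bot => intro u; exact ⟨le_refl (0:ℝ), zero_le_one⟩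
  | and φ ψ ih1 ih2 =>
    intro u
    exact ⟨le_min (ih1 u).1 (ih2 u).1, min_le_of_left_le (ih1 u).2⟩
  | or φ ψ ih1 ih2 =>
    intro u
    exact ⟨le_max_of_le_left (ih1 u).1, max_le (ih1 u).2 (ih2 u).2⟩
  | imp φ ψ ih1 ih2 => intro u; exact gimp_mem (ih2 u)
  | box φ ih =>
    intro u
    have hmem : (1:ℝ) ∈ {x | ∃ w, R u w ∧ x = ceval R v φ w} ∪ {1} :=
      Set.mem_union_right _ rfl
    have hbdd : BddBelow ({x | ∃ w, R u w ∧ x = ceval R v φ w} ∪ {1} : Set ℝ) := by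
      refine ⟨0, ?_⟩
      rintro z (⟨w, _, rfl⟩ | hz)
      · exact (ih w).1
      · rw [hz]; exact zero_le_one
    constructor
    · apply le_csInf ⟨1, hmem⟩
      rintro z (⟨w, _, rfl⟩ | hz)
      · exact (ih w).1
      · rw [hz]; exact zero_le_one
    · exact csInf_le hbdd hmem
  | dia φ ih =>
    intro u
    have hmem : (0:ℝ) ∈ {x | ∃ w, R u w ∧ x = ceval R v φ w} ∪ {0} :=
      Set.mem_union_right _ rfl
    have hbdd : BddAbove ({x | ∃ w, R u w ∧ x = ceval R v φ w} ∪ {0} : Set ℝ) := by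
      refine ⟨1, ?_⟩
      rintro z (⟨w, _, rfl⟩ | hz)
      · exact (ih w).2
      · rw [hz]; exact zero_le_one
    constructor
    · exact le_csSup hbdd hmem
    · apply csSup_le ⟨0, hmem⟩
      rintro z (⟨w, _, rfl⟩ | hz)
      · exact (ih w).2
      · rw [hz]; exact zero_le_one

lemma le_dia {W : Type} (R : W → W → Prop) (v : W → ℕ → ℝ)
    (hv : ∀ w n, v w n ∈ Set.Icc (0:ℝ) 1) (φ : MFm) {u w : W} (h : R u w) :
    ceval R v φ w ≤ ceval R v (.dia φ) u := by
  show ceval R v φ w ≤ sSup _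
  have hbdd : BddAbove ({x | ∃ w, R u w ∧ x = ceval R v φ w} ∪ {0} : Set ℝ) := by
    refine ⟨1, ?_⟩
    rintro z (⟨w', _, rfl⟩ | hz)
    · exact (ceval_mem R v hv φ w').2
    · rw [hz]; exact zero_le_one
  exact le_csSup hbdd (Or.inl ⟨w, h, rfl⟩)

/-- `UW_◇ := (◇x → ◇y) → (¬◇y ∨ ◇(x → y))` is valid in all
witnessed crisp Gödel-Kripke models. -/
theorem uwdia_valid_in_witnessed_crisp_models
    {W : Type} (R : W → W → Prop) (v : W → ℕ → ℝ)
    (hv : ∀ w n, v w n ∈ Set.Icc (0:ℝ) 1)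
    (hwit : CWitnessed R v) (u : W) :
    let x : MFm := .var 0
    let y : MFm := .var 1
    ceval R v
      (.imp (.imp (.dia x) (.dia y))
            (.or (.imp (.dia y) .bot) (.dia (.imp x y)))) u = 1 := by
  intro x y
  show gimp (gimp (ceval R v (.dia x) u) (ceval R v (.dia y) u))
    (max (gimp (ceval R v (.dia y) u) 0) (ceval R v (.dia (.imp x y)) u)) = 1
  set a := ceval R v (.dia x) u with ha
  set b := ceval R v (.dia y) u with hb
  set c := ceval R v (.dia (.imp x y)) u with hc
  have hb01 := ceval_mem R v hv (.dia y) u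
  have hc01 := ceval_mem R v hv (.dia (.imp x y)) u
  rw [← hb] at hb01
  rw [← hc] at hc01
  by_cases hb0 : b = 0
  · have h1 : gimp b 0 = 1 := gimp_eq_one (le_of_eq hb0)
    apply gimp_eq_one
    rw [h1]
    exact le_max_of_le_left (gimp_mem hb01).2
  · have hbpos : 0 < b := lt_of_le_of_ne hb01.1 (Ne.symm hb0)
    rcases (hwit y u).2 with h | ⟨w0, hR, hw0⟩
    · exact absurd h hb0
    · have hyw0 : ceval R v y w0 = b := hw0
      have hxw0 : ceval R v x w0 ≤ a := le_dia R v hv x hR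
      have hkey : gimp a b ≤ c := by
        by_cases hab : a ≤ b
        · have himp1 : ceval R v (.imp x y) w0 = 1 := by
            show gimp (ceval R v x w0) (ceval R v y w0) = 1
            rw [hyw0]; exact gimp_eq_one (le_trans hxw0 hab)
          have hc1 : (1:ℝ) ≤ c := himp1 ▸ le_dia R v hv (.imp x y) hR
          exact le_trans (gimp_mem hb01).2 hc1
        · have hg : gimp a b = b := if_neg hab
          rw [hg]
          have hble : b ≤ ceval R v (.imp x y) w0 := by
            show b ≤ gimp (ceval R v x w0) (ceval R v y w0)
            rw [hyw0]; unfold gimp; split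
            · exact hb01.2
            · exact le_refl b
          exact le_trans hble (le_dia R v hv (.imp x y) hR)
      exact gimp_eq_one (le_max_of_le_right hkey)
end

section
/- The formula UW_□ := □¬¬x → ¬¬□x is valid in all witnessed crisp Gödel-Kripke models. -/
/-- `UW_□ := □¬¬x → ¬¬□x` is valid in all witnessed crisp
Gödel-Kripke models. -/
theorem uwbox_valid_in_witnessed_crisp_models
    {W : Type} (R : W → W → Prop) (v : W → ℕ → ℝ)
    (hv : ∀ w n, v w n ∈ Set.Icc (0:ℝ) 1)
    (hwit : CWitnessed R v) (u : W) :
    let x : MFm := .var 0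
    let nn : MFm → MFm := fun φ => .imp (.imp φ .bot) .bot
    ceval R v (.imp (.box (nn x)) (nn (.box x))) u = 1 := by
  intro x nn
  have hmem := ceval_mem R v hv
  -- value of □x at u
  set b := ceval R v (.box x) u with hb
  have hb01 : b ∈ Set.Icc (0:ℝ) 1 := hmem _ u
  have hstep : ceval R v (.imp (.box (nn x)) (nn (.box x))) u
      = gimp (ceval R v (.box (nn x)) u) (gimp (gimp b 0) 0) := rfl
  rw [hstep]
  by_cases hbpos : (0:ℝ) < b
  · -- then nn (□x) evaluates to 1
    have h1 : ¬ (b ≤ 0) := not_le.mpr hbpos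
    have hinner : gimp (gimp b 0) 0 = 1 := by
      simp [gimp, h1]
    rw [hinner, gimp, if_pos (hmem (.box (nn x)) u).2]
  · -- b ≤ 0, so b = 0; nn (□x) evaluates to 0
    have hb0 : b = 0 := le_antisymm (not_lt.mp hbpos) hb01.1
    have h10 : ¬ ((1:ℝ) ≤ 0) := by norm_num
    have hinner : gimp (gimp b 0) 0 = 0 := by
      simp [gimp, hb0]
    rw [hinner]
    -- need ceval (□ nn x) u ≤ 0
    suffices h : ceval R v (.box (nn x)) u ≤ 0 by rw [gimp, if_pos h]
    -- from witnessed: ∃ w, R u w with ceval x w = b = 0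
    rcases (hwit x u).1 with h1 | ⟨w, hRw, hw⟩
    · rw [← hb, hb0] at h1; norm_num at h1
    · rw [← hb, hb0] at hw
      -- ceval (nn x) w = 0
      have hnn : ceval R v (nn x) w = 0 := by
        have : ceval R v (nn x) w = gimp (gimp (ceval R v x w) 0) 0 := rfl
        rw [this, hw]; simp only [gimp]; norm_num
      have hlb : ∀ y ∈ ({z | ∃ w', R u w' ∧ z = ceval R v (nn x) w'} ∪ {1} : Set ℝ),
          (0:ℝ) ≤ y := by
        rintro y (⟨w', _, rfl⟩ | rfl)
        · exact (hmem _ w').1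
        · exact zero_le_one
      calc ceval R v (.box (nn x)) u
          ≤ ceval R v (nn x) w :=
            csInf_le ⟨0, hlb⟩ (Or.inl ⟨w, hRw, rfl⟩)
        _ = 0 := hnn
end

section
/- The formula (◇x → ◇y) → (¬◇y ∨ ◇(x → y)) is not valid over witnessed Gödel-Kripke models with valued accessibility: in the model with W = {v, w}, R(v,w) = 1/2 (R = 0 elsewhere), e(w,x) = 1, e(w,y) = 1/2, the formula evaluates at v to 1/2. -/
/-- Evaluation in a valued Gödel-Kripke model: `R : W → W → ℝ` is the fuzzy
accessibility, `e(v,□φ) = ⨅_w (R v w → e(w,φ))`, `e(v,◇φ) = ⨆_w (R v w ∧ e(w,φ))`. -/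
noncomputable def veval {W : Type} (R : W → W → ℝ) (v : W → ℕ → ℝ) :
    MFm → W → ℝ
  | .var n, u => v u n
  | .bot, _ => 0
  | .and φ ψ, u => min (veval R v φ u) (veval R v ψ u)
  | .or φ ψ, u => max (veval R v φ u) (veval R v ψ u)
  | .imp φ ψ, u => gimp (veval R v φ u) (veval R v ψ u)
  | .box φ, u => sInf ((Set.range fun w => gimp (R u w) (veval R v φ w)) ∪ {1})
  | .dia φ, u => sSup ((Set.range fun w => min (R u w) (veval R v φ w)) ∪ {0})

theorem veval_dia_bool (R : Bool → Bool → ℝ) (v : Bool → ℕ → ℝ) (φ : MFm) (u : Bool) :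
    veval R v (.dia φ) u =
      max (min (R u false) (veval R v φ false)) (max (min (R u true) (veval R v φ true)) 0) := by
  rw [veval, Bool.range_eq, Set.insert_union, Set.singleton_union,
    csSup_insert (Set.toFinite _).bddAbove (Set.insert_nonempty _ _), csSup_pair]

/-- `(◇x → ◇y) → (¬◇y ∨ ◇(x → y))` is not valid over witnessed
valued Gödel-Kripke models: in the two-world model with `R(v,w) = 1/2`,
`e(w,x) = 1`, `e(w,y) = 1/2`, it evaluates to `1/2` at `v`. -/
theorem uwdia_fails_in_valued_models :
    let R : Bool → Bool → ℝ := fun a b => if a = false ∧ b = true then 1/2 else 0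
    let v : Bool → ℕ → ℝ := fun a n =>
      if a = true then (if n = 0 then 1 else if n = 1 then 1/2 else 0) else 0
    let x : MFm := .var 0
    let y : MFm := .var 1
    veval R v
      (.imp (.imp (.dia x) (.dia y))
            (.or (.imp (.dia y) .bot) (.dia (.imp x y)))) false = 1/2 := by
  intro R v x y
  -- `R(v,w) = 1/2` caps every `◇` at `v`, so `◇x = ◇y` makes the antecedent `1`, while
  -- `¬◇y = 0` and `◇(x → y) = min(1/2, 1 → 1/2) = 1/2`.
  have dia_x : veval R v (.dia x) false = 1/2 := by
    norm_num [veval_dia_bool, veval, R, v, x]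
  have dia_y : veval R v (.dia y) false = 1/2 := by
    norm_num [veval_dia_bool, veval, R, v, y]
  have dia_x_imp_y : veval R v (.dia (.imp x y)) false = 1/2 := by
    norm_num [veval_dia_bool, veval, gimp, R, v, x, y]
  simp only [veval.eq_2, veval.eq_4, veval.eq_5, dia_x, dia_y, dia_x_imp_y]
  norm_num [gimp]
end

section
/- In any valued Gödel-Kripke model, the Fischer-Servi axiom FS₁ holds: for every world v and formulas φ, ψ, e(v, ◇(φ → ψ)) ≤ e(v, □φ) → e(v, ◇ψ), where → on the right is Gödel implication in [0,1]. -/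
lemma gimp_nonneg {x y : ℝ} (hy : 0 ≤ y) : 0 ≤ gimp x y := by
  unfold gimp; split <;> linarith

lemma min_le_of_le_gimp {a b c : ℝ} (h : b ≤ gimp a c) : min a b ≤ c := by
  unfold gimp at h
  split at h
  · exact le_trans (min_le_left _ _) ‹a ≤ c›
  · exact le_trans (min_le_right _ _) h

lemma veval_nonneg {W : Type} (R : W → W → ℝ) (v : W → ℕ → ℝ)
    (hR : ∀ a b, R a b ∈ Set.Icc (0:ℝ) 1)
    (hv : ∀ w n, v w n ∈ Set.Icc (0:ℝ) 1) :
    ∀ (φ : MFm) (u : W), 0 ≤ veval R v φ u := by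
  intro φ
  induction φ with
  | var n => intro u; exact (hv u n).1
  | bot => intro u; simp [veval]
  | and φ ψ ihφ ihψ => intro u; exact le_min (ihφ u) (ihψ u)
  | or φ ψ ihφ ihψ => intro u; exact le_trans (ihφ u) (le_max_left _ _)
  | imp φ ψ ihφ ihψ => intro u; exact gimp_nonneg (ihψ u)
  | box φ ih =>
      intro u
      show (0:ℝ) ≤ sInf ((Set.range fun w => gimp (R u w) (veval R v φ w)) ∪ {1})
      apply le_csInf ⟨1, Set.mem_union_right _ (show (1:ℝ) ∈ ({1}:Set ℝ) from rfl)⟩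
      rintro b (⟨w, rfl⟩ | hb)
      · exact gimp_nonneg (ih w)
      · simp at hb; simp [hb]
  | dia φ ih =>
      intro u
      show (0:ℝ) ≤ sSup ((Set.range fun w => min (R u w) (veval R v φ w)) ∪ {0})
      refine le_csSup ⟨1, ?_⟩ (Set.mem_union_right _ (show (0:ℝ) ∈ ({0}:Set ℝ) from rfl))
      rintro b (⟨w, rfl⟩ | hb)
      · exact le_trans (min_le_left _ _) (hR u w).2
      · simp at hb; simp [hb]

/-- Fischer-Servi axiom `FS₁`: in any valued Gödel-Kripke model,
`e(v, ◇(φ → ψ)) ≤ e(v, □φ) → e(v, ◇ψ)`. -/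
theorem fs1_holds_valued
    {W : Type} (R : W → W → ℝ) (v : W → ℕ → ℝ)
    (hR : ∀ a b, R a b ∈ Set.Icc (0:ℝ) 1)
    (hv : ∀ w n, v w n ∈ Set.Icc (0:ℝ) 1)
    (u : W) (φ ψ : MFm) :
    veval R v (.dia (.imp φ ψ)) u ≤
      gimp (veval R v (.box φ) u) (veval R v (.dia ψ) u) := by

  have nn := veval_nonneg R v hR hv
  set B := veval R v (.box φ) u with hBdef
  set D := veval R v (.dia ψ) u with hDdef
  have hDnn : 0 ≤ D := nn _ u
  have hDia : ∀ w, min (R u w) (veval R v ψ w) ≤ D := by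
    intro w
    show min (R u w) (veval R v ψ w) ≤
      sSup ((Set.range fun w => min (R u w) (veval R v ψ w)) ∪ {0})
    refine le_csSup ⟨1, ?_⟩ (Set.mem_union_left _ ⟨w, rfl⟩)
    rintro b (⟨w', rfl⟩ | hb)
    · exact le_trans (min_le_left _ _) (hR u w').2
    · simp at hb; simp [hb]
  have hBox : ∀ w, B ≤ gimp (R u w) (veval R v φ w) := by
    intro w
    show sInf ((Set.range fun w => gimp (R u w) (veval R v φ w)) ∪ {1}) ≤
      gimp (R u w) (veval R v φ w)
    refine csInf_le ⟨0, ?_⟩ (Set.mem_union_left _ ⟨w, rfl⟩)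
    rintro b (⟨w', rfl⟩ | hb)
    · exact gimp_nonneg (nn _ w')
    · simp at hb; simp [hb]
  show sSup ((Set.range fun w => min (R u w) (veval R v (.imp φ ψ) w)) ∪ {0}) ≤
      gimp B D
  apply csSup_le ⟨0, Set.mem_union_right _ (show (0:ℝ) ∈ ({0}:Set ℝ) from rfl)⟩
  rintro x (⟨w, rfl⟩ | hx)
  swap
  · simp at hx; simp [hx]; exact gimp_nonneg hDnn
  set x := min (R u w) (veval R v (.imp φ ψ) w) with hxdef
  have hxR : x ≤ R u w := min_le_left _ _
  have hxi : x ≤ gimp (veval R v φ w) (veval R v ψ w) := min_le_right _ _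
  have key : min B x ≤ D := by
    have h1 : min B x ≤ veval R v φ w := by
      have : min (R u w) B ≤ veval R v φ w := min_le_of_le_gimp (hBox w)
      calc min B x ≤ min (R u w) B :=
            le_min (le_trans (min_le_right _ _) hxR) (min_le_left _ _)
        _ ≤ _ := this
    have h2 : min B x ≤ veval R v ψ w := by
      have h3 : min (veval R v φ w) (gimp (veval R v φ w) (veval R v ψ w)) ≤
          veval R v ψ w := min_le_of_le_gimp le_rfl
      exact le_trans (le_min h1 (le_trans (min_le_right _ _) hxi)) h3
    exact le_trans (le_min (le_trans (min_le_right _ _) hxR) h2) (hDia w)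
  unfold gimp
  split
  · exact le_trans hxR (hR u w).2
  · rcases le_total x B with h | h
    · have h' := key; rw [min_eq_right h] at h'; exact h'
    · have h' := key; rw [min_eq_left h] at h'; exact absurd h' ‹¬ B ≤ D›
end

section
/- In any valued Gödel-Kripke model, the Fischer-Servi axiom FS₂ holds: for every world v and formulas φ, ψ, e(v, ◇φ → □ψ) ≤ e(v, □(φ → ψ)), i.e., (e(v,◇φ) → e(v,□ψ)) ≤ inf_w (R(v,w) → e(w, φ → ψ)). -/
lemma gimp_cases (x y : ℝ) : gimp x y = 1 ∨ gimp x y = y := by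
  unfold gimp; split <;> simp

lemma veval_mem {W : Type} (R : W → W → ℝ) (v : W → ℕ → ℝ)
    (hR : ∀ a b, R a b ∈ Set.Icc (0:ℝ) 1)
    (hv : ∀ w n, v w n ∈ Set.Icc (0:ℝ) 1) :
    ∀ (φ : MFm) (u : W), veval R v φ u ∈ Set.Icc (0:ℝ) 1 := by
  intro φ
  induction φ with
  | var n => intro u; exact hv u n
  | bot => intro u; simp [veval]
  | and φ ψ ihφ ihψ =>
    intro u
    obtain ⟨h1, h2⟩ := ihφ u; obtain ⟨h3, h4⟩ := ihψ u
    constructor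
    · simp [veval]; constructor <;> assumption
    · simp [veval]; left; assumption
  | or φ ψ ihφ ihψ =>
    intro u
    obtain ⟨h1, h2⟩ := ihφ u; obtain ⟨h3, h4⟩ := ihψ u
    constructor
    · simp [veval]; left; assumption
    · simp [veval]; constructor <;> assumption
  | imp φ ψ ihφ ihψ =>
    intro u
    show gimp _ _ ∈ _
    rcases gimp_cases (veval R v φ u) (veval R v ψ u) with h | h <;> rw [h]
    · exact ⟨zero_le_one, le_refl 1⟩
    · exact ihψ u
  | box φ ih =>
    intro u
    show sInf _ ∈ _
    set S := (Set.range fun w => gimp (R u w) (veval R v φ w)) ∪ {(1:ℝ)} with hS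
    have hsub : ∀ x ∈ S, x ∈ Set.Icc (0:ℝ) 1 := by
      rintro x (⟨w, rfl⟩ | hx)
      · show gimp (R u w) (veval R v φ w) ∈ _
        rcases gimp_cases (R u w) (veval R v φ w) with h | h <;> rw [h]
        · exact ⟨zero_le_one, le_refl 1⟩
        · exact ih w
      · simp at hx; rw [hx]; exact ⟨zero_le_one, le_refl 1⟩
    have h1 : (1:ℝ) ∈ S := Or.inr rfl
    have hbdd : BddBelow S := ⟨0, fun x hx => (hsub x hx).1⟩
    exact ⟨le_csInf ⟨1, h1⟩ (fun x hx => (hsub x hx).1),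
      le_trans (csInf_le hbdd h1) (le_refl 1)⟩
  | dia φ ih =>
    intro u
    show sSup _ ∈ _
    set S := (Set.range fun w => min (R u w) (veval R v φ w)) ∪ {(0:ℝ)} with hS
    have hsub : ∀ x ∈ S, x ∈ Set.Icc (0:ℝ) 1 := by
      rintro x (⟨w, rfl⟩ | hx)
      · exact ⟨le_min (hR u w).1 (ih w).1, le_trans (min_le_left _ _) (hR u w).2⟩

      · simp at hx; rw [hx]; exact ⟨le_refl 0, zero_le_one⟩
    have h0 : (0:ℝ) ∈ S := Or.inr rfl
    have hbdd : BddAbove S := ⟨1, fun x hx => (hsub x hx).2⟩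
    exact ⟨le_csSup hbdd h0, csSup_le ⟨0, h0⟩ (fun x hx => (hsub x hx).2)⟩

/-- Fischer-Servi axiom `FS₂`: in any valued Gödel-Kripke model,
`(e(v,◇φ) → e(v,□ψ)) ≤ e(v, □(φ → ψ))`. -/
theorem fs2_holds_valued
    {W : Type} (R : W → W → ℝ) (v : W → ℕ → ℝ)
    (hR : ∀ a b, R a b ∈ Set.Icc (0:ℝ) 1)
    (hv : ∀ w n, v w n ∈ Set.Icc (0:ℝ) 1)
    (u : W) (φ ψ : MFm) :
    gimp (veval R v (.dia φ) u) (veval R v (.box ψ) u) ≤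
      veval R v (.box (.imp φ ψ)) u := by
  have hmem := veval_mem R v hR hv
  set D := veval R v (.dia φ) u with hD
  set B := veval R v (.box ψ) u with hB
  have hB1 : B ≤ 1 := (hmem (.box ψ) u).2
  have hgDB1 : gimp D B ≤ 1 := by
    rcases gimp_cases D B with h | h <;> rw [h] <;> linarith
  show gimp D B ≤ sInf _
  apply le_csInf ⟨(1:ℝ), Or.inr rfl⟩
  rintro x (⟨w, rfl⟩ | hx)
  swap
  · simp at hx; rw [hx]; exact hgDB1
  set r := R u w
  set a := veval R v φ w
  set b := veval R v ψ w
  show gimp D B ≤ gimp r (gimp a b)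
  by_cases hr : r ≤ gimp a b
  · have h1 : gimp r (gimp a b) = 1 := by rw [gimp, if_pos hr]
    rw [h1]; exact hgDB1
  have h2 : gimp r (gimp a b) = gimp a b := by rw [gimp, if_neg hr]
  rw [h2]
  -- r > gimp a b, hence ¬ a ≤ b and gimp a b = b, r > b
  have hab : ¬ a ≤ b := by
    intro h; apply hr; rw [gimp, if_pos h]; exact (hR u w).2
  have hgab : gimp a b = b := by rw [gimp, if_neg hab]
  rw [hgab] at hr ⊢
  push_neg at hr hab
  -- key facts: min r a ≤ D and B ≤ b
  have hminD : min r a ≤ D := by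
    rw [hD]
    show _ ≤ sSup _
    apply le_csSup
    · refine ⟨1, ?_⟩
      rintro x (⟨w', rfl⟩ | hx)
      · exact le_trans (min_le_left _ _) (hR u w').2
      · simp at hx; rw [hx]; exact zero_le_one
    · exact Or.inl ⟨w, rfl⟩
  have hBb : B ≤ gimp r b := by
    rw [hB]
    show sInf _ ≤ _
    apply csInf_le
    · refine ⟨0, ?_⟩
      rintro x (⟨w', rfl⟩ | hx)
      · show (0:ℝ) ≤ gimp (R u w') (veval R v ψ w')
        rcases gimp_cases (R u w') (veval R v ψ w') with h | h <;> rw [h]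
        · exact zero_le_one
        · exact (hmem ψ w').1
      · simp at hx; rw [hx]; exact zero_le_one
    · exact Or.inl ⟨w, rfl⟩
  rw [gimp, if_neg (not_le.mpr hr)] at hBb
  by_cases hDB : D ≤ B
  · exfalso
    have : min r a ≤ b := le_trans hminD (le_trans hDB hBb)
    rcases min_cases r a with ⟨h, _⟩ | ⟨h, _⟩ <;> rw [h] at this <;> linarith
  · rw [gimp, if_neg hDB]; exact hBb
end
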